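/- Let φ : G → Fin k be a perfect coloring of H (with any parameter matrix). If φ((y·z)·(y·z)·v) = φ(v) for every v ∈ X, then φ((y·z)·(y·z)·w) = φ(w) for every w ∈ G; that is, if y·z·y·z is a period of φ on the double zigzag line X, then it is a period of the whole coloring. -/

import Mathlib

namespace HexGrid

/-- Relations of the hexagonal grid group: x² = y² = z² = (x·y·z)² = 1. -/
def hexRels : Set (FreeGroup (Fin 3)) :=
  {FreeGroup.of 0 * FreeGroup.of 0,
   FreeGroup.of 1 * FreeGroup.of 1,
   FreeGroup.of 2 * FreeGroup.of 2,
   FreeGroup.of 0 * FreeGroup.of 1 * FreeGroup.of 2 *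
     (FreeGroup.of 0 * FreeGroup.of 1 * FreeGroup.of 2)}

/-- The group `G = ⟨x, y, z ∣ x² = y² = z² = (x·y·z)² = 1⟩`. -/
abbrev G := PresentedGroup hexRels

/-- The generators of `G`. -/
def gen (i : Fin 3) : G := PresentedGroup.of i

def x : G := gen 0
def y : G := gen 1
def z : G := gen 2

lemma gen_mul_self (i : Fin 3) : gen i * gen i = 1 := by
  have h : FreeGroup.of i * FreeGroup.of i ∈ Subgroup.normalClosure hexRels :=
    Subgroup.subset_normalClosure (by fin_cases i <;> simp [hexRels])
  exact (QuotientGroup.eq_one_iff _).mpr h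

/-- The infinite hexagonal grid `H`: the Cayley graph of `G` with respect to `{x, y, z}`;
`u` and `v` are adjacent iff `v ∈ {u·x, u·y, u·z}`. -/
def H : SimpleGraph G where
  Adj u v := u ≠ v ∧ ∃ i : Fin 3, v = u * gen i
  symm := by
    constructor
    rintro u v ⟨hne, i, rfl⟩
    exact ⟨hne.symm, i, by rw [mul_assoc, gen_mul_self, mul_one]⟩
  loopless := by constructor; rintro u ⟨hne, -⟩; exact hne rfl

/-- `φ` is a perfect coloring of `H` with parameter matrix `A`: for every vertex `u` and
every color `j`, the number of neighbors of `u` in `H` colored `j` equals `A (φ u) j`. -/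
def IsPerfectColoring {k : ℕ} (φ : G → Fin k) (A : Matrix (Fin k) (Fin k) ℕ) : Prop :=
  ∀ u : G, ∀ j : Fin k, Set.ncard {v : G | H.Adj u v ∧ φ v = j} = A (φ u) j

/-- A matrix is tridiagonal if its entries vanish whenever the indices differ by more
than one. -/
def IsTridiagonal {k : ℕ} (A : Matrix (Fin k) (Fin k) ℕ) : Prop :=
  ∀ i j : Fin k, ((i : ℕ) + 1 < (j : ℕ) ∨ (j : ℕ) + 1 < (i : ℕ)) → A i j = 0

/-- Two colorings are equivalent if one is obtained from the other by composing with a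
graph automorphism of `H`. -/
def EquivColoring {k : ℕ} (φ ψ : G → Fin k) : Prop :=
  ∃ g : H ≃g H, ψ = fun v => φ (g v)

/-- The double (zigzag) line `X = {(y·z)ⁿ : n ∈ ℤ} ∪ {(y·z)ⁿ·x : n ∈ ℤ}`. -/
def Xline : Set G := {g : G | ∃ n : ℤ, g = (y * z) ^ n ∨ g = (y * z) ^ n * x}

end HexGrid

/-!
Every element of `G` is `(y·z)^a·(y·x)^b·y^s` for some `(a, b, s) ∈ ℤ × ℤ × Bool`, because
`y·z` and `y·x` commute. In these coordinates `H` is a brick wall: row `(b, s)` is a line indexed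
by `a`, left multiplication by `(y·z)²` is the translation `a ↦ a + 2` along every row, and `X` is
the union of the rows `(0, false)` and `(-1, true)`.

In a perfect coloring, vertices of the same color see the same multiset of neighbor colors. The
vertices `(a, b, true)` and `(a + 2, b, true)` have equal colors and two of their three pairs of
neighbors have equal colors, so the third pair, in row `(b + 1, false)`, does too. For row
`(b + 1, true)` this only gives `{r (a + 2), r (a + 1)} = {r a, r (a - 1)}` for the row coloring
`r`, which already forces `r (a + 2) = r a`. The reflection `(a, b, s) ↦ (-a, -b, !s)` of the
brick wall turns the rows below into rows above.
-/

open Function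

lemma Multiset.pair_eq_pair {α : Type*} {a b c d : α} (h : ({a, b} : Multiset α) = {c, d}) :
    a = c ∧ b = d ∨ a = d ∧ b = c := by
  have ha : a ∈ ({c, d} : Multiset α) := h ▸ Multiset.mem_cons_self a _
  rcases Multiset.mem_cons.mp ha with rfl | ha
  · exact .inl ⟨rfl, Multiset.singleton_inj.mp ((Multiset.cons_inj_right a).mp h)⟩
  · rw [Multiset.mem_singleton.mp ha, Multiset.pair_comm c] at h
    exact .inr ⟨Multiset.mem_singleton.mp ha,
      Multiset.singleton_inj.mp ((Multiset.cons_inj_right d).mp h)⟩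

lemma Function.periodic_comp_neg_iff {M α : Type*} [AddCommGroup M] {r : M → α} {c : M} :
    Periodic (fun a => r (-a)) c ↔ Periodic r c := by
  constructor <;> intro h a <;> simpa [neg_add, add_comm] using h.neg (-a)

lemma Function.periodic_two_of_pair_shift {α : Type*} {r : ℤ → α}
    (h : ∀ a, ({r (a + 2), r (a + 1)} : Multiset α) = {r a, r (a - 1)}) : Periodic r 2 := by
  intro a
  rcases Multiset.pair_eq_pair (h a) with ⟨h₂, -⟩ | ⟨-, h₁⟩
  · exact h₂
  · have h' := h (a + 1)
    rw [show a + 1 + 1 = a + 2 by ring, add_sub_cancel_right, h₁] at h'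
    have hmem : r (a + 2) ∈ ({r a, r a} : Multiset α) :=
      h' ▸ Multiset.mem_cons_of_mem (Multiset.mem_singleton_self _)
    simpa using hmem

/-- A perfect coloring, with its parameter matrix left implicit, of the `ι`-regular graph in which
the neighbors of `p` are the `nbr p i`. -/
def IsEquitable {V ι α : Type*} [Fintype ι] (nbr : V → ι → V) (f : V → α) : Prop :=
  ∀ p q, f p = f q →
    (Finset.univ.val.map fun i => f (nbr p i)) = Finset.univ.val.map fun i => f (nbr q i)

lemma IsEquitable.comp {V W ι α : Type*} [Fintype ι] {nbr : V → ι → V} {nbr' : W → ι → W}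
    {f : W → α} {π : V → W} (hf : IsEquitable nbr' f) (hπ : ∀ p i, π (nbr p i) = nbr' (π p) i) :
    IsEquitable nbr (f ∘ π) := by
  intro p q h
  simpa only [comp_apply, hπ] using hf _ _ h

namespace BrickWall

/-- The three neighbors of `(a, b, s)` in the brick wall, in the order of the generators
`x, y, z` of `G`. -/
def nbr : ℤ × ℤ × Bool → Fin 3 → ℤ × ℤ × Bool
  | (a, b, false) => ![(a, b - 1, true), (a, b, true), (a - 1, b, true)]
  | (a, b, true) => ![(a, b + 1, false), (a, b, false), (a + 1, b, false)]

def reflect (p : ℤ × ℤ × Bool) : ℤ × ℤ × Bool := (-p.1, -p.2.1, !p.2.2)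

lemma reflect_nbr (p : ℤ × ℤ × Bool) (i : Fin 3) : reflect (nbr p i) = nbr (reflect p) i := by
  obtain ⟨a, b, _ | _⟩ := p <;> fin_cases i <;> simp [nbr, reflect] <;> ring

variable {α : Type*}

lemma map_nbr_false (f : ℤ × ℤ × Bool → α) (a b : ℤ) :
    (Finset.univ.val.map fun i => f (nbr (a, b, false) i)) =
      {f (a, b - 1, true), f (a, b, true), f (a - 1, b, true)} := rfl

lemma map_nbr_true (f : ℤ × ℤ × Bool → α) (a b : ℤ) :
    (Finset.univ.val.map fun i => f (nbr (a, b, true) i)) =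
      {f (a, b + 1, false), f (a, b, false), f (a + 1, b, false)} := rfl

end BrickWall

namespace IsEquitable

open BrickWall

variable {α : Type*} {f : ℤ × ℤ × Bool → α}

lemma periodic_row_succ_false (hf : IsEquitable nbr f) {b : ℤ}
    (h₀ : Periodic (fun a => f (a, b, false)) 2) (h₁ : Periodic (fun a => f (a, b, true)) 2) :
    Periodic (fun a => f (a, b + 1, false)) 2 := by
  intro a
  have h := hf (a + 2, b, true) (a, b, true) (h₁ a)
  rw [map_nbr_true, map_nbr_true, show a + 2 + 1 = a + 1 + 2 by ring] at h
  simp only [h₀ a, h₀ (a + 1)] at h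
  exact (Multiset.cons_inj_left _).mp h

lemma periodic_row_succ_true (hf : IsEquitable nbr f) {b : ℤ}
    (h₀ : Periodic (fun a => f (a, b + 1, false)) 2) (h₁ : Periodic (fun a => f (a, b, true)) 2) :
    Periodic (fun a => f (a, b + 1, true)) 2 := by
  refine periodic_two_of_pair_shift fun a => ?_
  have h := hf (a + 2, b + 1, false) (a, b + 1, false) (h₀ a)
  rw [map_nbr_false, map_nbr_false, add_sub_cancel_right, show a + 2 - 1 = a + 1 by ring] at h
  simp only [h₁ a] at h
  exact (Multiset.cons_inj_right _).mp h

lemma periodic_rows_of_nat (hf : IsEquitable nbr f)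
    (h₀ : Periodic (fun a => f (a, 0, false)) 2) (h₁ : Periodic (fun a => f (a, 0, true)) 2)
    (n : ℕ) : Periodic (fun a => f (a, n, false)) 2 ∧ Periodic (fun a => f (a, n, true)) 2 := by
  induction n with
  | zero => exact ⟨h₀, h₁⟩
  | succ n ih =>
    have hF := hf.periodic_row_succ_false ih.1 ih.2
    push_cast
    exact ⟨hF, hf.periodic_row_succ_true hF ih.2⟩

lemma periodic_rows (hf : IsEquitable nbr f)
    (h₀ : Periodic (fun a => f (a, 0, false)) 2) (h₁ : Periodic (fun a => f (a, -1, true)) 2)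
    (b : ℤ) (s : Bool) : Periodic (fun a => f (a, b, s)) 2 := by
  have h₁' : Periodic (fun a => f (a, 0, true)) 2 := by
    simpa using hf.periodic_row_succ_true (b := -1) (by simpa using h₀) h₁
  have reflect_row (b : ℤ) (s : Bool) : Periodic (fun a => (f ∘ reflect) (a, b, s)) 2 ↔
      Periodic (fun a => f (a, -b, !s)) 2 :=
    periodic_comp_neg_iff (r := fun a => f (a, -b, !s))
  rcases Int.eq_nat_or_neg b with ⟨n, rfl | rfl⟩
  · cases s
    exacts [(hf.periodic_rows_of_nat h₀ h₁' n).1, (hf.periodic_rows_of_nat h₀ h₁' n).2]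
  · have hσ := (hf.comp reflect_nbr).periodic_rows_of_nat
      ((reflect_row 0 false).mpr (by simpa using h₁'))
      ((reflect_row 0 true).mpr (by simpa using h₀)) n
    cases s
    exacts [by simpa using (reflect_row n true).mp hσ.2,
      by simpa using (reflect_row n false).mp hσ.1]

end IsEquitable

namespace HexGrid

lemma gen_inv (i : Fin 3) : (gen i)⁻¹ = gen i := inv_eq_of_mul_eq_one_right (gen_mul_self i)

lemma z_mul_z : z * z = 1 := gen_mul_self 2

lemma xyz_mul_xyz : x * y * z * (x * y * z) = 1 :=
  (QuotientGroup.eq_one_iff (N := Subgroup.normalClosure hexRels) (FreeGroup.of 0 * FreeGroup.of 1 *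
    FreeGroup.of 2 * (FreeGroup.of 0 * FreeGroup.of 1 * FreeGroup.of 2))).mpr
    (Subgroup.subset_normalClosure (by simp [hexRels]))

lemma commute_yz_yx : Commute (y * z) (y * x) := by
  have hzyx : z * y * x = x * y * z := by
    rw [← inv_eq_of_mul_eq_one_right xyz_mul_xyz]
    simp only [x, y, z, mul_inv_rev, gen_inv, mul_assoc]
  simp only [Commute, SemiconjBy, mul_assoc] at hzyx ⊢
  rw [hzyx]

def toKlein : G →* Multiplicative (ZMod 2 × ZMod 2) :=
  PresentedGroup.toGroup (f := ![.ofAdd (1, 0), .ofAdd (0, 1), .ofAdd (1, 1)]) <| by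
    rintro r (rfl | rfl | rfl | rfl) <;> simp only [map_mul, FreeGroup.lift_apply_of] <;> decide

lemma toKlein_gen (i : Fin 3) :
    toKlein (gen i) = ![.ofAdd (1, 0), .ofAdd (0, 1), .ofAdd (1, 1)] i :=
  PresentedGroup.toGroup.of _

lemma gen_injective : Injective gen := by
  intro i j h
  have := congrArg toKlein h
  rw [toKlein_gen, toKlein_gen] at this
  revert this
  fin_cases i <;> fin_cases j <;> decide

lemma gen_ne_one (i : Fin 3) : gen i ≠ 1 := by
  intro h
  have := congrArg toKlein h
  rw [toKlein_gen, map_one] at this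
  revert this
  fin_cases i <;> decide

lemma H_adj_iff {u v : G} : H.Adj u v ↔ ∃ i, v = u * gen i :=
  ⟨And.right, fun ⟨i, hi⟩ => ⟨fun h => gen_ne_one i (mul_eq_left.mp (hi ▸ h).symm), i, hi⟩⟩

lemma ncard_adj_color {α : Type*} [DecidableEq α] (φ : G → α) (u : G) (j : α) :
    {v | H.Adj u v ∧ φ v = j}.ncard = (Finset.univ.val.map fun i => φ (u * gen i)).count j := by
  have hset : {v | H.Adj u v ∧ φ v = j} =
      (Finset.univ.filter fun i => φ (u * gen i) = j).map
        ⟨(u * gen ·), (mul_right_injective u).comp gen_injective⟩ := by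
    ext v
    simp only [Set.mem_ofPred_eq, H_adj_iff, Finset.coe_map, Finset.coe_filter, Set.mem_image]
    constructor
    · rintro ⟨⟨i, rfl⟩, rfl⟩
      exact ⟨i, ⟨Finset.mem_univ i, rfl⟩, rfl⟩
    · rintro ⟨i, ⟨-, rfl⟩, rfl⟩
      exact ⟨⟨i, rfl⟩, rfl⟩
  rw [hset, Set.ncard_coe_finset, Finset.card_map, Multiset.count_map, Finset.card_def,
    Finset.filter_val]
  simp only [eq_comm]

lemma IsPerfectColoring.isEquitable {k : ℕ} {φ : G → Fin k} {A : Matrix (Fin k) (Fin k) ℕ}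
    (hφ : IsPerfectColoring φ A) : IsEquitable (fun u i => u * gen i) φ := fun u v h =>
  Multiset.ext.mpr fun j => by rw [← ncard_adj_color, ← ncard_adj_color, hφ, hφ, h]

def ofBrick : ℤ × ℤ × Bool → G
  | (a, b, false) => (y * z) ^ a * (y * x) ^ b
  | (a, b, true) => (y * z) ^ a * (y * x) ^ b * y

lemma ofBrick_nbr (p : ℤ × ℤ × Bool) (i : Fin 3) :
    ofBrick (BrickWall.nbr p i) = ofBrick p * gen i := by
  have hcomm (b : ℤ) (t : G) : y * (z * ((y * x) ^ b * t)) = (y * x) ^ b * (y * (z * t)) := by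
    simp only [← mul_assoc, (commute_yz_yx.zpow_right b).eq]
  obtain ⟨a, b, _ | _⟩ := p <;> fin_cases i
  · simp [BrickWall.nbr, ofBrick, x, y, mul_assoc, zpow_sub_one, gen_inv, gen_mul_self]
  · rfl
  · show (y * z) ^ (a - 1) * (y * x) ^ b * y = (y * z) ^ a * (y * x) ^ b * z
    conv_rhs => rw [← sub_add_cancel a 1, zpow_add_one]
    simp only [mul_assoc, hcomm, z_mul_z, mul_one]
  · simp [BrickWall.nbr, ofBrick, zpow_add_one, mul_assoc]; rfl
  · simp [BrickWall.nbr, ofBrick, mul_assoc, y, gen_mul_self]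
  · show (y * z) ^ (a + 1) * (y * x) ^ b = (y * z) ^ a * (y * x) ^ b * y * z
    rw [zpow_add_one, mul_assoc, (commute_yz_yx.zpow_right b).eq]
    simp only [mul_assoc]

lemma ofBrick_surjective : Surjective ofBrick := by
  intro w
  have hw : w ∈ Subgroup.closure (Set.range gen) :=
    (PresentedGroup.closure_range_of hexRels).symm ▸ Subgroup.mem_top w
  induction hw using Subgroup.closure_induction_right with
  | one => exact ⟨(0, 0, false), by simp [ofBrick]⟩
  | mul_right _ _ _ hi ih =>
    obtain ⟨i, rfl⟩ := hi
    obtain ⟨p, hp⟩ := ih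
    exact ⟨BrickWall.nbr p i, by rw [ofBrick_nbr, hp]⟩
  | mul_inv_cancel _ _ _ hi ih =>
    obtain ⟨i, rfl⟩ := hi
    obtain ⟨p, hp⟩ := ih
    exact ⟨BrickWall.nbr p i, by rw [ofBrick_nbr, hp, gen_inv]⟩

lemma yz_mul_yz_mul_ofBrick (a b : ℤ) (s : Bool) :
    y * z * (y * z) * ofBrick (a, b, s) = ofBrick (a + 2, b, s) := by
  cases s <;> simp only [ofBrick, add_comm a 2, zpow_add, zpow_two, mul_assoc]

lemma ofBrick_zero_false_mem_Xline (a : ℤ) : ofBrick (a, 0, false) ∈ Xline :=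
  ⟨a, .inl (by simp [ofBrick])⟩

lemma ofBrick_neg_one_true_mem_Xline (a : ℤ) : ofBrick (a, -1, true) ∈ Xline :=
  ⟨a, .inr (by simp [ofBrick, x, y, mul_assoc, gen_inv, gen_mul_self])⟩

/-- If `(y·z)²` is a period of a perfect coloring on the double line `X`, then it is a
period of the whole coloring. -/
theorem period_on_line_extends {k : ℕ} (φ : G → Fin k) (A : Matrix (Fin k) (Fin k) ℕ)
    (hφ : IsPerfectColoring φ A)
    (hX : ∀ v ∈ Xline, φ ((y * z) * (y * z) * v) = φ v) :
    ∀ w : G, φ ((y * z) * (y * z) * w) = φ w := by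
  have hf : IsEquitable BrickWall.nbr (φ ∘ ofBrick) := hφ.isEquitable.comp ofBrick_nbr
  have h₀ : Periodic (fun a => φ (ofBrick (a, 0, false))) 2 := fun a => by
    simpa only [yz_mul_yz_mul_ofBrick] using hX _ (ofBrick_zero_false_mem_Xline a)
  have h₁ : Periodic (fun a => φ (ofBrick (a, -1, true))) 2 := fun a => by
    simpa only [yz_mul_yz_mul_ofBrick] using hX _ (ofBrick_neg_one_true_mem_Xline a)
  intro w
  obtain ⟨⟨a, b, s⟩, rfl⟩ := ofBrick_surjective w
  rw [yz_mul_yz_mul_ofBrick]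
  exact hf.periodic_rows h₀ h₁ b s a

end HexGrid
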